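/- Let y be a fixed action and define the 'reality check defaulting to y' of an agent π, π_RC(y), recursively by: π_RC(y)(s) = π(s) if s is possible for π_RC(y), and π_RC(y)(s) = y otherwise. Then π_RC(y)(s) = π(s) whenever s is possible for π; in particular π is traditionally equivalent to π_RC(y). -/

import Mathlib

/-- Alternating history x₁y₁...xₙ ending in a percept: the first percept
    together with the list of subsequent (action, percept) pairs. -/
abbrev Hist (P A : Type*) := P × List (A × P)

/-- An agent maps nonempty alternating percept-action histories
    (ending in a percept) to actions. -/
abbrev Agent (P A : Type*) := Hist P A → A

/-- `h` is possible for `π`: for all 1 ≤ i < n, π(x₁y₁...xᵢ) = yᵢ. -/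
def Possible {P A : Type*} (π : Agent P A) (h : Hist P A) : Prop :=
  ∀ i, (hi : i < h.2.length) → π (h.1, h.2.take i) = (h.2.get ⟨i, hi⟩).1

/-- π₁ and π₂ are traditionally equivalent: they agree on every sequence
    possible for π₁. -/
def TradEquiv {P A : Type*} (π₁ π₂ : Agent P A) : Prop :=
  ∀ h : Hist P A, Possible π₁ h → π₁ h = π₂ h

/-- Auxiliary recursion for the reality check defaulting to y. -/
def RCdAux {P A : Type*} [DecidableEq A] (π : Agent P A) (y : A)
    (x : P) (l : List (A × P)) : A :=
  if (∀ i, (hi : i < l.length) → RCdAux π y x (l.take i) = (l.get ⟨i, hi⟩).1)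
  then π (x, l) else y
termination_by l.length
decreasing_by all_goals (simp [List.length_take]; omega)

/-- The reality check of π defaulting to y: π_RC(y)(s) = π(s) if s is
    possible for π_RC(y), else π_RC(y)(s) = y. -/
def RCd {P A : Type*} [DecidableEq A] (π : Agent P A) (y : A) : Agent P A :=
  fun h => RCdAux π y h.1 h.2

theorem Possible.take {P A : Type*} {π : Agent P A} {x : P} {l : List (A × P)}
    (hp : Possible π (x, l)) (n : ℕ) : Possible π (x, l.take n) := by
  intro i hi
  simp only [List.length_take, lt_min_iff] at hi
  simpa [List.take_take, min_eq_left hi.1.le, List.getElem_take] using hp i hi.2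

theorem RCdAux_eq_of_possible {P A : Type*} [DecidableEq A] (π : Agent P A) (y : A)
    (x : P) (l : List (A × P)) (hp : Possible π (x, l)) : RCdAux π y x l = π (x, l) := by
  rw [RCdAux, if_pos]
  intro i hi
  rw [RCdAux_eq_of_possible π y x (l.take i) (hp.take i)]
  exact hp i hi
termination_by l.length
decreasing_by simp only [List.length_take]; omega

theorem RCd_eq_of_possible {P A : Type*} [DecidableEq A] (π : Agent P A) (y : A)
    (h : Hist P A) (hp : Possible π h) : RCd π y h = π h :=
  RCdAux_eq_of_possible π y h.1 h.2 hp

theorem realityCheckDefault_tradEquiv_general {P A : Type*}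
    [DecidableEq A] (π : Agent P A) (y : A) :
    (∀ h : Hist P A, Possible π h → RCd π y h = π h) ∧
      TradEquiv π (RCd π y) :=
  ⟨RCd_eq_of_possible π y, fun h hp => (RCd_eq_of_possible π y h hp).symm⟩

/-- π_RC(y) agrees with π on every sequence possible for π; in particular
    π is traditionally equivalent to π_RC(y). -/
theorem realityCheckDefault_tradEquiv {P A : Type*}
    [Fintype P] [Fintype A] [DecidableEq A] (π : Agent P A) (y : A) :
    (∀ h : Hist P A, Possible π h → RCd π y h = π h) ∧
      TradEquiv π (RCd π y) :=
  realityCheckDefault_tradEquiv_general π y
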